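/- arXiv:2307.15368 — 3 statements merged into one kernel-verified Lean document; each statement's English description precedes it below -/
import Mathlib

section
/- Suppose U ⊆ ℝ^m and there exist a vector-valued function ψ : X → ℝ^{N}, matrices A, B_1, …, B_m ∈ ℝ^{N×N} and C ∈ ℝ^{N×m} such that ψ(T(x,u)) = A ψ(x) + Σ_{i=1}^m u_i B_i ψ(x) + C u for all (x,u) ∈ X × U. Then the ℂ-span of the component functions of ψ together with the constant function 1_X is a finite-dimensional common invariant subspace under the Koopman control family associated with T, and the augmented vector satisfies the input-state separable identity [ψ(T(x,u)); 1] = [[A + Σ_{i=1}^m u_i B_i, C u], [0, 1]] · [ψ(x); 1] for all (x,u). -/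
/-!
Composition with `T(·, u)` is a linear map on functions, so the span is invariant as soon as
each generator is mapped into it. For the generators this is immediate: the constant `1` is
fixed, and the bilinear hypothesis writes `ψ_i ∘ T(·, u)` as the affine combination
`Σ_j (A + Σ_k u_k B_k)_{ij} ψ_j + (C u)_i · 1`. The same affine formula, read as a product
of block matrices, is the input-state separable identity.
-/

open Matrix

theorem Submodule.comp_mem_span_of_forall_mem {R M α : Type*} [Semiring R] [AddCommMonoid M]
    [Module R M] (F : α → α) {s : Set (α → M)} (hs : ∀ g ∈ s, g ∘ F ∈ span R s)
    {f : α → M} (hf : f ∈ span R s) : f ∘ F ∈ span R s :=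
  (span_le.2 hs : span R s ≤ (span R s).comap (LinearMap.funLeft R M F)) hf

theorem ofReal_comp_mem_span_insert_one_range {X ι : Type*} [Fintype ι] (φ : ι → X → ℝ)
    {g : X → ℝ} (a : ι → ℝ) (b : ℝ) (hg : ∀ x, g x = ∑ j, a j * φ j x + b) :
    (fun x => (g x : ℂ)) ∈
      Submodule.span ℂ (insert (fun _ : X => (1 : ℂ)) (Set.range fun j x => (φ j x : ℂ))) := by
  have hg' : (fun x => (g x : ℂ)) =
      ∑ j, (a j : ℂ) • (fun x => (φ j x : ℂ)) + (b : ℂ) • fun _ => 1 := by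
    funext x
    simp [hg]
  rw [hg']
  exact Submodule.add_mem _
    (Submodule.sum_mem _ fun j _ => Submodule.smul_mem _ _
      (Submodule.subset_span (Set.mem_insert_of_mem _ ⟨j, rfl⟩)))
    (Submodule.smul_mem _ _ (Submodule.subset_span (Set.mem_insert _ _)))

theorem Matrix.mulVec_add_sum_smul_mulVec {R n κ : Type*} [Semiring R] [Fintype n]
    [Fintype κ] (A : Matrix n n R) (B : κ → Matrix n n R) (u : κ → R) (v : n → R) (i : n) :
    (A *ᵥ v) i + ∑ k, u k * (B k *ᵥ v) i = ((A + ∑ k, u k • B k) *ᵥ v) i := by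
  simp [add_mulVec, sum_mulVec, smul_mulVec]

theorem Matrix.fromBlocks_col_zero_one_mulVec_sumElim_one {R n : Type*} [Semiring R]
    [Fintype n] (M : Matrix n n R) (c v : n → R) :
    fromBlocks M (of fun i (_ : Unit) => c i) 0 (1 : Matrix Unit Unit R) *ᵥ
        Sum.elim v (fun _ => 1) =
      Sum.elim (M *ᵥ v + c) (fun _ => 1) := by
  ext (i | i) <;> simp [mulVec, dotProduct]

theorem bilinear_is_input_state_separable_general
    {X : Type*} {m : ℕ} (U : Set (Fin m → ℝ))
    (T : X × U → X) (N : ℕ)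
    (ψ : Fin N → X → ℝ)
    (A : Matrix (Fin N) (Fin N) ℝ) (B : Fin m → Matrix (Fin N) (Fin N) ℝ)
    (C : Matrix (Fin N) (Fin m) ℝ)
    (h : ∀ (x : X) (u : U) (i : Fin N),
      ψ i (T (x, u)) =
        (∑ j, A i j * ψ j x) + (∑ k, (u : Fin m → ℝ) k * ∑ j, B k i j * ψ j x)
          + ∑ k, C i k * (u : Fin m → ℝ) k) :
    (∀ f ∈ Submodule.span ℂ
        (insert (fun _ : X => (1 : ℂ)) (Set.range fun i => fun x => (ψ i x : ℂ))),
      ∀ u : U, (fun x => f (T (x, u))) ∈ Submodule.span ℂ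
        (insert (fun _ : X => (1 : ℂ)) (Set.range fun i => fun x => (ψ i x : ℂ))))
    ∧ FiniteDimensional ℂ ↥(Submodule.span ℂ
        (insert (fun _ : X => (1 : ℂ)) (Set.range fun i => fun x => (ψ i x : ℂ))))
    ∧ (∀ (x : X) (u : U) (i : Fin N ⊕ Unit),
        Sum.elim (fun i' => ψ i' (T (x, u))) (fun _ => (1 : ℝ)) i =
        ∑ j, Matrix.fromBlocks
            (A + ∑ k, (u : Fin m → ℝ) k • B k)
            (Matrix.of fun i' (_ : Unit) => ∑ k, C i' k * (u : Fin m → ℝ) k)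
            0 1 i j *
          Sum.elim (fun j' => ψ j' x) (fun _ => (1 : ℝ)) j) := by
  have affine : ∀ (x : X) (u : U) (i : Fin N), ψ i (T (x, u)) =
      ∑ j, (A + ∑ k, (u : Fin m → ℝ) k • B k) i j * ψ j x + ∑ k, C i k * (u : Fin m → ℝ) k :=
    fun x u i => (h x u i).trans <|
      congrArg (· + _) (mulVec_add_sum_smul_mulVec A B _ (fun j => ψ j x) i)
  refine ⟨fun f hf u => Submodule.comp_mem_span_of_forall_mem (fun x => T (x, u)) ?_ hf,
    FiniteDimensional.span_of_finite ℂ ((Set.finite_range _).insert _), fun x u => ?_⟩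
  · rintro g (rfl | ⟨i, rfl⟩)
    · exact Submodule.subset_span (Set.mem_insert _ _)
    · exact ofReal_comp_mem_span_insert_one_range ψ _ _ (fun x => affine x u i)
  · have hvec := fromBlocks_col_zero_one_mulVec_sumElim_one (A + ∑ k, (u : Fin m → ℝ) k • B k)
      (fun i' => ∑ k, C i' k * (u : Fin m → ℝ) k) (fun j' => ψ j' x)
    intro i
    refine Eq.trans ?_ (congrFun hvec i).symm
    rcases i with i | _
    · exact affine x u i
    · rfl

/-- If `U ⊆ ℝ^m` and there are `ψ : X → ℝ^N`, matrices `A, B_1, …, B_m`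
and `C` with `ψ(T(x,u)) = A ψ(x) + Σ_i u_i B_i ψ(x) + C u`, then the ℂ-span of the
components of `ψ` together with the constant function `1` is a finite-dimensional
common invariant subspace under the Koopman control family, and the augmented vector
`[ψ; 1]` satisfies the input-state separable identity given by the block matrix
`[[A + Σ_i u_i B_i, C u], [0, 1]]`. -/
theorem bilinear_is_input_state_separable
    {X : Type*} [Nonempty X] {m : ℕ} (U : Set (Fin m → ℝ)) (hU : U.Nonempty)
    (T : X × U → X) (N : ℕ)
    (ψ : Fin N → X → ℝ)
    (A : Matrix (Fin N) (Fin N) ℝ) (B : Fin m → Matrix (Fin N) (Fin N) ℝ)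
    (C : Matrix (Fin N) (Fin m) ℝ)
    (h : ∀ (x : X) (u : U) (i : Fin N),
      ψ i (T (x, u)) =
        (∑ j, A i j * ψ j x) + (∑ k, (u : Fin m → ℝ) k * ∑ j, B k i j * ψ j x)
          + ∑ k, C i k * (u : Fin m → ℝ) k) :
    (∀ f ∈ Submodule.span ℂ
        (insert (fun _ : X => (1 : ℂ)) (Set.range fun i => fun x => (ψ i x : ℂ))),
      ∀ u : U, (fun x => f (T (x, u))) ∈ Submodule.span ℂ
        (insert (fun _ : X => (1 : ℂ)) (Set.range fun i => fun x => (ψ i x : ℂ))))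
    ∧ FiniteDimensional ℂ ↥(Submodule.span ℂ
        (insert (fun _ : X => (1 : ℂ)) (Set.range fun i => fun x => (ψ i x : ℂ))))
    ∧ (∀ (x : X) (u : U) (i : Fin N ⊕ Unit),
        Sum.elim (fun i' => ψ i' (T (x, u))) (fun _ => (1 : ℝ)) i =
        ∑ j, Matrix.fromBlocks
            (A + ∑ k, (u : Fin m → ℝ) k • B k)
            (Matrix.of fun i' (_ : Unit) => ∑ k, C i' k * (u : Fin m → ℝ) k)
            0 1 i j *
          Sum.elim (fun j' => ψ j' x) (fun _ => (1 : ℝ)) j) :=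
  bilinear_is_input_state_separable_general U T N ψ A B C h
end

section
/- Let S be a ℂ-subspace of functions X × U → ℂ that is invariant under the augmented Koopman operator K^aug. Suppose in addition that the restricted subspaces coincide for all inputs, i.e., S|_{u=u_1} = S|_{u=u_2} for all u_1, u_2 ∈ U, where S|_{u=u*} = { x ↦ g(x,u*) : g ∈ S }. Then for every u* ∈ U, the subspace S|_{u=u*} of functions X → ℂ is a common invariant subspace under the Koopman control family {K_{u'}}_{u'∈U}, i.e., h ∘ T_{u'} ∈ S|_{u=u*} for every h ∈ S|_{u=u*} and every u' ∈ U. -/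
/-!
Restricting `g ∈ S` to the slice `u = u'` intertwines the augmented Koopman operator with
`K_{u'}`, so invariance of `S` under `K^aug` makes the slice at `u'` invariant under `K_{u'}`.
Since all slices coincide, the slice at `u*` is the slice at `u'` for every `u'`.
-/

/-- The paper's `S|_{u=u*}`. -/
def inputRestriction {X U M : Type*} (S : Set (X × U → M)) (ustar : U) : Set (X → M) :=
  {h | ∃ g ∈ S, h = fun x => g (x, ustar)}

theorem comp_mem_inputRestriction_of_augmented_invariant {X U M : Type*} (T : X × U → X)
    {S : Set (X × U → M)} (hinv : ∀ g ∈ S, (fun p : X × U => g (T p, p.2)) ∈ S) {u : U}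
    {h : X → M} (hh : h ∈ inputRestriction S u) :
    (fun x => h (T (x, u))) ∈ inputRestriction S u := by
  obtain ⟨g, hg, rfl⟩ := hh
  exact ⟨_, hinv g hg, rfl⟩

theorem restricted_subspace_common_invariant_general
    {X U : Type*} (T : X × U → X)
    (S : Submodule ℂ (X × U → ℂ))
    (hinv : ∀ g ∈ S, (fun p : X × U => g (T p, p.2)) ∈ S)
    (hres : ∀ u₁ u₂ : U,
      {h : X → ℂ | ∃ g ∈ S, h = fun x => g (x, u₁)} =
        {h : X → ℂ | ∃ g ∈ S, h = fun x => g (x, u₂)}) :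
    ∀ (ustar u' : U) (h : X → ℂ),
      (∃ g ∈ S, h = fun x => g (x, ustar)) →
      (∃ g' ∈ S, (fun x => h (T (x, u'))) = fun x => g' (x, ustar)) := by
  intro ustar u' h hh
  have hslice : inputRestriction (S : Set (X × U → ℂ)) u' = inputRestriction S ustar :=
    hres u' ustar
  have hh' : h ∈ inputRestriction (S : Set (X × U → ℂ)) u' := hslice ▸ hh
  have hK := comp_mem_inputRestriction_of_augmented_invariant T hinv hh'
  rwa [hslice] at hK

/-- If `S` is a ℂ-subspace of functions `X × U → ℂ` invariant under the
augmented Koopman operator, and all restricted subspaces `S|_{u=u*}` coincide, then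
for every `u* ∈ U` the subspace `S|_{u=u*}` is a common invariant subspace under the
Koopman control family: `h ∘ T_{u'} ∈ S|_{u=u*}` for every `h ∈ S|_{u=u*}` and `u' ∈ U`. -/
theorem restricted_subspace_common_invariant
    {X U : Type*} [Nonempty X] [Nonempty U] (T : X × U → X)
    (S : Submodule ℂ (X × U → ℂ))
    (hinv : ∀ g ∈ S, (fun p : X × U => g (T p, p.2)) ∈ S)
    (hres : ∀ u₁ u₂ : U,
      {h : X → ℂ | ∃ g ∈ S, h = fun x => g (x, u₁)} =
        {h : X → ℂ | ∃ g ∈ S, h = fun x => g (x, u₂)}) :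
    ∀ (ustar u' : U) (h : X → ℂ),
      (∃ g ∈ S, h = fun x => g (x, ustar)) →
      (∃ g' ∈ S, (fun x => h (T (x, u'))) = fun x => g' (x, ustar)) :=
  restricted_subspace_common_invariant_general T S hinv hres
end

section
/- Let S be an s-dimensional ℂ-subspace of functions X × U → ℂ consisting of input-state separable combinations that is invariant under the augmented Koopman operator K^aug (i.e., g ∘ T^aug ∈ S for all g ∈ S). Let Φ : X × U → ℂ^s be a basis of S (its components forming a basis) admitting a decomposition Φ(x,u) = G(u) H(x) for all (x,u), where G : U → ℂ^{s×l} and H : X → ℂ^l. If G(u) has full column rank (rank l) for every u ∈ U, then the ℂ-span of the component functions of H is a common invariant subspace under the Koopman control family {K_{u*}}_{u*∈U}. -/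
/-!
Invariance of `S` under the augmented Koopman operator gives a matrix `A` with
`Φ ∘ T^aug = A Φ`. Substituting `Φ(x, u) = G(u) H(x)` yields `G(u) H(T(x, u)) = A G(u) H(x)`, and
since `G(u)` has full column rank it has a left inverse `B`, so `H ∘ T_u = (B A G(u)) H`: every
`H j ∘ T_u` is a linear combination of the `H k`.
-/

open Matrix Submodule

theorem Matrix.linearIndependent_col_of_rank_eq {K m n : Type*} [Field K] [Fintype n]
    {A : Matrix m n K} (h : A.rank = Fintype.card n) : LinearIndependent K A.col := by
  rw [linearIndependent_iff_card_eq_finrank_span, Set.finrank, ← rank_eq_finrank_span_cols, h]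

theorem Matrix.exists_mul_eq_one_of_rank_eq {K m n : Type*} [Field K] [Fintype m] [Fintype n]
    [DecidableEq n] {A : Matrix m n K} (h : A.rank = Fintype.card n) :
    ∃ B : Matrix n m K, B * A = 1 := by
  classical
  have hker : LinearMap.ker A.mulVecLin = ⊥ :=
    LinearMap.ker_eq_bot.2 (mulVec_injective_iff.2 (linearIndependent_col_of_rank_eq h))
  obtain ⟨g, hg⟩ := A.mulVecLin.exists_leftInverse_of_injective hker
  refine ⟨LinearMap.toMatrix' g, Matrix.toLin'.injective ?_⟩
  rw [Matrix.toLin'_mul, Matrix.toLin'_toMatrix', Matrix.toLin'_one, ← hg]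
  rfl

theorem exists_matrix_mulVec_eq_of_forall_mem_span {R α ι κ : Type*} [Semiring R] [Fintype ι]
    {f : ι → α → R} {g : κ → α → R} (h : ∀ i, g i ∈ span R (Set.range f)) :
    ∃ A : Matrix κ ι R, ∀ a, (fun i => g i a) = A *ᵥ fun k => f k a := by
  choose A hA using fun i => (mem_span_range_iff_exists_fun R).1 (h i)
  refine ⟨A, fun a => funext fun i => ?_⟩
  simp [← hA i, mulVec, dotProduct, Finset.sum_apply]

theorem comp_mem_span_range_of_mulVec_eq {R α ι : Type*} [CommSemiring R] [Fintype ι]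
    {H : ι → α → R} {τ : α → α} (M : Matrix ι ι R)
    (hM : ∀ x, (fun j => H j (τ x)) = M *ᵥ fun j => H j x) :
    ∀ h ∈ span R (Set.range H), h ∘ τ ∈ span R (Set.range H) := by
  suffices span R (Set.range H) ≤ (span R (Set.range H)).comap (LinearMap.funLeft R R τ) from
    fun h hh => this hh
  rw [span_le]
  rintro _ ⟨j, rfl⟩
  have hcomb : H j ∘ τ = ∑ k, M j k • H k := funext fun x => by
    simpa [mulVec, dotProduct, Finset.sum_apply] using congrFun (hM x) j
  show H j ∘ τ ∈ span R (Set.range H)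
  rw [hcomb]
  exact sum_mem fun k _ => smul_mem _ _ (subset_span (Set.mem_range_self k))

theorem rank_condition_gives_common_invariant_subspace_general
    {X U : Type*} (T : X × U → X)
    (S : Submodule ℂ (X × U → ℂ)) (s l : ℕ)
    (hInv : ∀ g ∈ S, (fun p : X × U => g (T p, p.2)) ∈ S)
    (Φ : Fin s → X × U → ℂ)
    (hspan : Submodule.span ℂ (Set.range Φ) = S)
    (G : U → Matrix (Fin s) (Fin l) ℂ) (H : Fin l → X → ℂ)
    (hdec : ∀ (x : X) (u : U) (i : Fin s), Φ i (x, u) = ∑ j, G u i j * H j x)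
    (hrank : ∀ u : U, (G u).rank = l) :
    ∀ h ∈ Submodule.span ℂ (Set.range H), ∀ u : U,
      (fun x => h (T (x, u))) ∈ Submodule.span ℂ (Set.range H) := by
  have hΦ : ∀ x u, (fun i => Φ i (x, u)) = G u *ᵥ fun j => H j x := fun x u => funext (hdec x u)
  obtain ⟨A, hA⟩ : ∃ A : Matrix (Fin s) (Fin s) ℂ,
      ∀ p : X × U, (fun i => Φ i (T p, p.2)) = A *ᵥ fun k => Φ k p := by
    refine exists_matrix_mulVec_eq_of_forall_mem_span fun i => ?_
    rw [hspan]
    exact hInv _ (hspan ▸ subset_span (Set.mem_range_self i))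
  intro h hh u
  obtain ⟨B, hB⟩ := (G u).exists_mul_eq_one_of_rank_eq (by rw [hrank u, Fintype.card_fin])
  refine comp_mem_span_range_of_mulVec_eq (B * A * G u) (fun x => ?_) h hh
  calc (fun j => H j (T (x, u)))
      = B *ᵥ G u *ᵥ fun j => H j (T (x, u)) := by rw [mulVec_mulVec, hB, one_mulVec]
    _ = B *ᵥ A *ᵥ G u *ᵥ fun j => H j x := by rw [← hΦ, ← hΦ, hA (x, u)]
    _ = (B * A * G u) *ᵥ fun j => H j x := by rw [mulVec_mulVec, mulVec_mulVec, Matrix.mul_assoc]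

/-- Let `S` be an `s`-dimensional ℂ-subspace of functions `X × U → ℂ`
consisting of input-state separable combinations, invariant under the augmented Koopman
operator. Let `Φ` be a basis of `S` decomposed as `Φ(x,u) = G(u)H(x)` with
`G : U → ℂ^{s×l}`, `H : X → ℂ^l`. If `G(u)` has full column rank for every `u`, then
the ℂ-span of the components of `H` is a common invariant subspace under the Koopman
control family. -/
theorem rank_condition_gives_common_invariant_subspace
    {X U : Type*} [Nonempty X] [Nonempty U] (T : X × U → X)
    (S : Submodule ℂ (X × U → ℂ)) (s l : ℕ)
    (hSep : ∀ f ∈ S, f ∈ Submodule.span ℂ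
      {f : X × U → ℂ | ∃ (g : U → ℂ) (h : X → ℂ), ∀ (x : X) (u : U), f (x, u) = g u * h x})
    (hInv : ∀ g ∈ S, (fun p : X × U => g (T p, p.2)) ∈ S)
    (Φ : Fin s → X × U → ℂ)
    (hli : LinearIndependent ℂ Φ)
    (hspan : Submodule.span ℂ (Set.range Φ) = S)
    (G : U → Matrix (Fin s) (Fin l) ℂ) (H : Fin l → X → ℂ)
    (hdec : ∀ (x : X) (u : U) (i : Fin s), Φ i (x, u) = ∑ j, G u i j * H j x)
    (hrank : ∀ u : U, (G u).rank = l) :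
    ∀ h ∈ Submodule.span ℂ (Set.range H), ∀ u : U,
      (fun x => h (T (x, u))) ∈ Submodule.span ℂ (Set.range H) :=
  rank_condition_gives_common_invariant_subspace_general T S s l hInv Φ hspan G H hdec hrank
end
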